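/- Loss comparison for threshold predictors: let y, z : I → [0,1] be distributions on a finite set I (Σ y = 1, Σ z ≤ 1) and ℓ : I × Y → [0,1] a loss over a finite action set Y. Let m minimize Σ_i y_i ℓ(i, a) over a ∈ Y and s minimize Σ_i z_i ℓ(i, a) over a ∈ Y. Then (sqrt(Σ_i y_i ℓ(i,s)) − sqrt(Σ_i y_i ℓ(i,m)))^2 ≤ 2 Σ_i (sqrt(y_i) − sqrt(z_i))^2. -/

import Mathlib

/-!
With `L = ℓ(·, s)` and `M = ℓ(·, m)`, split the gap as
`(√⟨y,L⟩ - √⟨z,L⟩) + (√⟨z,L⟩ - √⟨z,M⟩) + (√⟨z,M⟩ - √⟨y,M⟩)`; the middle term is `≤ 0` because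
`s` is optimal for `z`. An outer term `√⟨u,K⟩ - √⟨v,K⟩` with `0 ≤ K ≤ 1` is at most
`⟨√u - √v, p⟩` for `p = √u · K / √⟨u,K⟩`, which is nonnegative with `‖p‖ ≤ 1` because `K² ≤ K`.
So the gap is at most `⟨√y - √z, p - q⟩`, and a single Cauchy–Schwarz step with
`‖p - q‖² ≤ ‖p‖² + ‖q‖² ≤ 2` (as `p, q ≥ 0`) bounds it by `√2 · ‖√y - √z‖`.
-/

open Finset Real

theorem sum_sub_sq_le_sum_sq_add_sum_sq {I : Type*} [Fintype I] {p q : I → ℝ}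
    (hp : 0 ≤ p) (hq : 0 ≤ q) :
    ∑ i, (p i - q i) ^ 2 ≤ ∑ i, p i ^ 2 + ∑ i, q i ^ 2 := by
  rw [← sum_add_distrib]
  gcongr with i
  nlinarith [mul_nonneg (hp i) (hq i)]

theorem sum_sqrt_mul_sqrt_mul_le {I : Type*} [Fintype I] {y z L : I → ℝ}
    (hy : 0 ≤ y) (hz : 0 ≤ z) (hL : 0 ≤ L) :
    ∑ i, √(y i) * √(z i) * L i ≤ √(∑ i, y i * L i) * √(∑ i, z i * L i) := by
  refine le_of_eq_of_le (sum_congr rfl fun i _ => ?_)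
    (sum_sqrt_mul_sqrt_le univ (fun i => mul_nonneg (hy i) (hL i))
      fun i => mul_nonneg (hz i) (hL i))
  rw [sqrt_mul (hy i), sqrt_mul (hz i), mul_mul_mul_comm, mul_self_sqrt (hL i)]

theorem exists_sqrt_sum_mul_sub_sqrt_sum_mul_le {I : Type*} [Fintype I] {y z L : I → ℝ}
    (hy : 0 ≤ y) (hz : 0 ≤ z) (hL0 : 0 ≤ L) (hL1 : L ≤ 1) :
    ∃ p : I → ℝ, 0 ≤ p ∧ ∑ i, p i ^ 2 ≤ 1 ∧
      √(∑ i, y i * L i) - √(∑ i, z i * L i) ≤ ∑ i, (√(y i) - √(z i)) * p i := by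
  obtain ht | ht := (sqrt_nonneg (∑ i, y i * L i)).eq_or_lt
  · exact ⟨0, le_rfl, by simp, by simp [← ht]⟩
  set t := √(∑ i, y i * L i)
  have hyL : 0 ≤ ∑ i, y i * L i := sum_nonneg fun i _ => mul_nonneg (hy i) (hL0 i)
  refine ⟨fun i => √(y i) * L i / t,
    fun i => div_nonneg (mul_nonneg (sqrt_nonneg _) (hL0 i)) ht.le, ?_, ?_⟩
  · calc ∑ i, (√(y i) * L i / t) ^ 2 = (∑ i, y i * L i ^ 2) / t ^ 2 := by
          simp_rw [div_pow, mul_pow, sq_sqrt (hy _), sum_div]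
      _ ≤ (∑ i, y i * L i) / t ^ 2 := by
          gcongr with i
          exacts [hy i, pow_le_of_le_one (hL0 i) (hL1 i) two_ne_zero]
      _ = 1 := by rw [sq_sqrt hyL, div_self (sqrt_pos.1 ht).ne']
  · calc t - √(∑ i, z i * L i) = (t ^ 2 - t * √(∑ i, z i * L i)) / t := by
          field_simp
      _ ≤ (t ^ 2 - ∑ i, √(y i) * √(z i) * L i) / t := by
          gcongr; exact sum_sqrt_mul_sqrt_mul_le hy hz hL0
      _ = ∑ i, (√(y i) - √(z i)) * (√(y i) * L i / t) := by
          rw [sq_sqrt hyL, ← sum_sub_distrib, sum_div]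
          refine sum_congr rfl fun i _ => ?_
          linear_combination (L i / t) * (mul_self_sqrt (hy i)).symm

theorem sqrt_sum_mul_sub_sqrt_sum_mul_le {I : Type*} [Fintype I] {y z L M : I → ℝ}
    (hy : 0 ≤ y) (hz : 0 ≤ z) (hL0 : 0 ≤ L) (hL1 : L ≤ 1) (hM0 : 0 ≤ M) (hM1 : M ≤ 1)
    (hLM : ∑ i, z i * L i ≤ ∑ i, z i * M i) :
    √(∑ i, y i * L i) - √(∑ i, y i * M i) ≤ √2 * √(∑ i, (√(y i) - √(z i)) ^ 2) := by
  obtain ⟨p, hp0, hp1, hp⟩ := exists_sqrt_sum_mul_sub_sqrt_sum_mul_le hy hz hL0 hL1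
  obtain ⟨q, hq0, hq1, hq⟩ := exists_sqrt_sum_mul_sub_sqrt_sum_mul_le hz hy hM0 hM1
  have hsqrt := sqrt_le_sqrt hLM
  calc √(∑ i, y i * L i) - √(∑ i, y i * M i)
      ≤ ∑ i, (√(y i) - √(z i)) * p i + ∑ i, (√(z i) - √(y i)) * q i := by linarith
    _ = ∑ i, (√(y i) - √(z i)) * (p i - q i) := by
      rw [← sum_add_distrib]; exact sum_congr rfl fun i _ => by ring
    _ ≤ √(∑ i, (√(y i) - √(z i)) ^ 2) * √(∑ i, (p i - q i) ^ 2) :=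
      sum_mul_le_sqrt_mul_sqrt _ _ _
    _ ≤ √(∑ i, (√(y i) - √(z i)) ^ 2) * √2 := by
      gcongr
      linarith [sum_sub_sq_le_sum_sq_add_sum_sq hp0 hq0]
    _ = √2 * √(∑ i, (√(y i) - √(z i)) ^ 2) := mul_comm _ _

theorem loss_bound_threshold_predictors_general
    {I Y : Type*} [Fintype I]
    (y z : I → ℝ) (ℓ : I → Y → ℝ)
    (hy0 : ∀ i, 0 ≤ y i)
    (hz0 : ∀ i, 0 ≤ z i)
    (hl0 : ∀ i a, 0 ≤ ℓ i a) (hl1 : ∀ i a, ℓ i a ≤ 1)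
    (m s : Y)
    (hm : ∀ a, ∑ i, y i * ℓ i m ≤ ∑ i, y i * ℓ i a)
    (hs : ∀ a, ∑ i, z i * ℓ i s ≤ ∑ i, z i * ℓ i a) :
    (Real.sqrt (∑ i, y i * ℓ i s) - Real.sqrt (∑ i, y i * ℓ i m)) ^ 2
      ≤ 2 * ∑ i, (Real.sqrt (y i) - Real.sqrt (z i)) ^ 2 := by
  have hgap : 0 ≤ √(∑ i, y i * ℓ i s) - √(∑ i, y i * ℓ i m) := sub_nonneg.2 (sqrt_le_sqrt (hm s))
  calc (√(∑ i, y i * ℓ i s) - √(∑ i, y i * ℓ i m)) ^ 2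
      ≤ (√2 * √(∑ i, (√(y i) - √(z i)) ^ 2)) ^ 2 := by
        gcongr
        exact sqrt_sum_mul_sub_sqrt_sum_mul_le hy0 hz0 (hl0 · s) (hl1 · s) (hl0 · m) (hl1 · m)
          (hs m)
    _ = 2 * ∑ i, (√(y i) - √(z i)) ^ 2 := by
        rw [mul_pow, sq_sqrt zero_le_two, sq_sqrt (sum_nonneg fun i _ => sq_nonneg _)]

theorem loss_bound_threshold_predictors
    {I Y : Type*} [Fintype I] [Fintype Y] [Nonempty I] [Nonempty Y]
    (y z : I → ℝ) (ℓ : I → Y → ℝ)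
    (hy0 : ∀ i, 0 ≤ y i) (hy1 : ∀ i, y i ≤ 1) (hysum : ∑ i, y i = 1)
    (hz0 : ∀ i, 0 ≤ z i) (hz1 : ∀ i, z i ≤ 1) (hzsum : ∑ i, z i ≤ 1)
    (hl0 : ∀ i a, 0 ≤ ℓ i a) (hl1 : ∀ i a, ℓ i a ≤ 1)
    (m s : Y)
    (hm : ∀ a, ∑ i, y i * ℓ i m ≤ ∑ i, y i * ℓ i a)
    (hs : ∀ a, ∑ i, z i * ℓ i s ≤ ∑ i, z i * ℓ i a) :
    (Real.sqrt (∑ i, y i * ℓ i s) - Real.sqrt (∑ i, y i * ℓ i m)) ^ 2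
      ≤ 2 * ∑ i, (Real.sqrt (y i) - Real.sqrt (z i)) ^ 2 :=
  loss_bound_threshold_predictors_general y z ℓ hy0 hz0 hl0 hl1 m s hm hs
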